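/- For each group g ∈ {X, Y}, let f₁^g, f₀^g be full-support probability densities on ℝ satisfying strict MLRP, and let H^g be a monotone nondecreasing continuous cost CDF. Then the following are equivalent: (a) there exist measurable classifiers δ^X, δ^Y : ℝ → [0,1] with equal true positive rates 𝒯 and equal false positive rates ℱ across groups satisfying 𝒯 > ℱ (error-rate balance by an informative classifier), and a common stake r ∈ ℝ (equal stakes), such that H^X(r·(𝒯 − ℱ)) = H^Y(r·(𝒯 − ℱ)) (equal prevalence, hence predictive parity) and H^g(r·(𝒯 − ℱ)) ≥ H^g(0) for both g (aligned incentives); (b) there exists c̄ ≥ 0 with H^X(c̄) = H^Y(c̄). -/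

import Mathlib

/-!
Necessity: if the common cost `r (𝒯 - ℱ)` is negative, aligned incentives and monotonicity
make both cost CDFs constant on `[r (𝒯 - ℱ), 0]`, so they also cross at `0`.

Sufficiency: strict MLRP forces `f₁ ≠ f₀` on a set of positive measure, so the likelihood-ratio
test `1{f₀ < f₁}` is informative in each group. Mixing it with a fair coin slides its ROC point
towards `(1/2, 1/2)`, so both groups can be given the common rates `(1/2 + d, 1/2)` for any small
`d > 0`, and the stake `r = c̄ / d` puts the common cost at the crossing point `c̄`.
-/

open MeasureTheory

/-- A full-support probability density on ℝ. -/
def IsFullSupportDensity (f : ℝ → ℝ) : Prop :=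
  Measurable f ∧ (∀ s, 0 < f s) ∧ (∫ s, f s) = 1

/-- Strict monotone likelihood ratio property of `f₁` relative to `f₀`. -/
def StrictMLRP (f₁ f₀ : ℝ → ℝ) : Prop :=
  ∀ s t : ℝ, s < t → f₁ s * f₀ t < f₁ t * f₀ s

/-- A (randomized) classifier: a measurable map from signals to probabilities. -/
def IsClassifier (δ : ℝ → ℝ) : Prop :=
  Measurable δ ∧ ∀ s, δ s ∈ Set.Icc (0 : ℝ) 1

/-- True positive rate of classifier `δ` against compliant density `f₁`. -/
noncomputable def TPR (δ f₁ : ℝ → ℝ) : ℝ := ∫ s, δ s * f₁ s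

/-- False positive rate of classifier `δ` against non-compliant density `f₀`. -/
noncomputable def FPR (δ f₀ : ℝ → ℝ) : ℝ := ∫ s, δ s * f₀ s

open Filter

lemma IsFullSupportDensity.integrable {f : ℝ → ℝ} (hf : IsFullSupportDensity f) :
    Integrable f := by
  by_contra h
  simpa [integral_undef h] using hf.2.2

lemma StrictMLRP.not_ae_eq {f₁ f₀ : ℝ → ℝ} (hm : StrictMLRP f₁ f₀) : ¬ f₁ =ᵐ[volume] f₀ := by
  intro h
  have hS : {s | f₁ s = f₀ s}.Nontrivial := by
    by_contra hsub
    have hcompl : volume {s | f₁ s = f₀ s}ᶜ = 0 := ae_iff.mp h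
    have := measure_union_le (μ := volume) {s | f₁ s = f₀ s} {s | f₁ s = f₀ s}ᶜ
    simp [Set.not_nontrivial_iff.mp hsub |>.measure_zero, hcompl] at this
  obtain ⟨x, hx : f₁ x = f₀ x, y, hy : f₁ y = f₀ y, hxy⟩ := hS
  rcases hxy.lt_or_gt with hlt | hlt
  · exact (hm x y hlt).ne (by rw [hx, hy, mul_comm])
  · exact (hm y x hlt).ne (by rw [hx, hy, mul_comm])

lemma volume_setOf_lt_pos_of_integral_eq {f g : ℝ → ℝ} (hf : Integrable f) (hg : Integrable g)
    (hfg : ∫ s, f s = ∫ s, g s) (hne : ¬ f =ᵐ[volume] g) : 0 < volume {s | g s < f s} := by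
  refine pos_iff_ne_zero.mpr fun h0 => hne ?_
  have hle : f ≤ᵐ[volume] g := by
    filter_upwards [measure_eq_zero_iff_ae_notMem.mp h0] with s hs
    exact not_lt.mp hs
  exact (integral_eq_iff_of_ae_le hf hg hle).mp hfg

namespace IsClassifier

variable {δ f : ℝ → ℝ}

lemma integrable_mul (hδ : IsClassifier δ) (hf : Integrable f) :
    Integrable (fun s => δ s * f s) :=
  hf.bdd_mul hδ.1.aestronglyMeasurable (c := 1) (Eventually.of_forall fun s => by
    rw [Real.norm_eq_abs, abs_le]
    exact ⟨by linarith [(hδ.2 s).1], (hδ.2 s).2⟩)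

lemma integral_mul_mem_Icc (hδ : IsClassifier δ) (hf : IsFullSupportDensity f) :
    ∫ s, δ s * f s ∈ Set.Icc 0 1 := by
  refine ⟨integral_nonneg fun s => mul_nonneg (hδ.2 s).1 (hf.2.1 s).le, ?_⟩
  calc ∫ s, δ s * f s ≤ ∫ s, f s :=
        integral_mono (hδ.integrable_mul hf.integrable) hf.integrable
          fun s => mul_le_of_le_one_left (hf.2.1 s).le (hδ.2 s).2
    _ = 1 := hf.2.2

lemma integral_affine_mul (hδ : IsClassifier δ) (hf : Integrable f) (hf1 : ∫ s, f s = 1)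
    (a b c : ℝ) :
    ∫ s, (a + b * (δ s - c)) * f s = a + b * ((∫ s, δ s * f s) - c) := by
  have hpoint : (fun s => (a + b * (δ s - c)) * f s)
      = fun s => (a - b * c) * f s + b * (δ s * f s) := by
    funext s; ring
  rw [hpoint, integral_add (hf.const_mul _) ((hδ.integrable_mul hf).const_mul _),
    integral_const_mul, integral_const_mul, hf1]
  ring

end IsClassifier

lemma isClassifier_indicator_one {S : Set ℝ} (hS : MeasurableSet S) :
    IsClassifier (S.indicator 1) :=
  ⟨measurable_one.indicator hS, fun s => by
    by_cases h : s ∈ S <;> simp [h]⟩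

lemma exists_classifier_fpr_lt_tpr {f₁ f₀ : ℝ → ℝ} (hm₁ : Measurable f₁) (hm₀ : Measurable f₀)
    (hi₁ : Integrable f₁) (hi₀ : Integrable f₀) (heq : ∫ s, f₁ s = ∫ s, f₀ s)
    (hne : ¬ f₁ =ᵐ[volume] f₀) : ∃ δ, IsClassifier δ ∧ FPR δ f₀ < TPR δ f₁ := by
  set S := {s | f₀ s < f₁ s}
  have hS : MeasurableSet S := measurableSet_lt hm₀ hm₁
  have hδ := isClassifier_indicator_one hS
  refine ⟨S.indicator 1, hδ, sub_pos.mp ?_⟩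
  have hgap : TPR (S.indicator 1) f₁ - FPR (S.indicator 1) f₀
      = ∫ s, S.indicator (fun s => f₁ s - f₀ s) s := by
    rw [TPR, FPR, ← integral_sub (hδ.integrable_mul hi₁) (hδ.integrable_mul hi₀)]
    congr 1 with s
    by_cases h : s ∈ S <;> simp [h]
  have hsupp : Function.support (S.indicator fun s => f₁ s - f₀ s) = S := by
    ext s
    by_cases h : s ∈ S
    · simp [h, sub_ne_zero.mpr (show f₀ s < f₁ s from h).ne']
    · simp [h]
  rw [hgap, integral_pos_iff_support_of_nonneg, hsupp]
  · exact volume_setOf_lt_pos_of_integral_eq hi₁ hi₀ heq hne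
  · intro s
    by_cases h : s ∈ S
    · simpa [h] using h.le
    · simp [h]
  · exact (hi₁.sub hi₀).indicator hS

/-- `1/2 + k (δ - FPR δ)` has rates `(1/2 + k (TPR δ - FPR δ), 1/2)` and stays in `[0, 1]` for
`0 ≤ k ≤ 1/2`. -/
lemma exists_classifier_rates_of_le_gap {f₁ f₀ δ : ℝ → ℝ} (h₁ : IsFullSupportDensity f₁)
    (h₀ : IsFullSupportDensity f₀) (hδ : IsClassifier δ) (hgap : FPR δ f₀ < TPR δ f₁)
    {d : ℝ} (hd : 0 ≤ d) (hdle : d ≤ (TPR δ f₁ - FPR δ f₀) / 2) :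
    ∃ δ', IsClassifier δ' ∧ TPR δ' f₁ = 1 / 2 + d ∧ FPR δ' f₀ = 1 / 2 := by
  set F := FPR δ f₀
  set k := d / (TPR δ f₁ - F)
  have hk : 0 ≤ k := div_nonneg hd (sub_pos.mpr hgap).le
  have hk2 : k ≤ 1 / 2 := by
    rw [div_le_iff₀ (sub_pos.mpr hgap)]; linarith
  have hF : F ∈ Set.Icc 0 1 := hδ.integral_mul_mem_Icc h₀
  refine ⟨fun s => 1 / 2 + k * (δ s - F), ⟨((hδ.1.sub_const F).const_mul k).const_add _, fun s => ?_⟩,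
    ?_, ?_⟩
  · have hs := hδ.2 s
    have hlo : -(1 / 2) ≤ k * (δ s - F) := by nlinarith [hs.1, hF.2]
    have hhi : k * (δ s - F) ≤ 1 / 2 := by nlinarith [hs.2, hF.1]
    constructor <;> linarith
  · rw [TPR, hδ.integral_affine_mul h₁.integrable h₁.2.2, ← TPR,
      div_mul_cancel₀ _ (sub_pos.mpr hgap).ne']
  · rw [FPR, hδ.integral_affine_mul h₀.integrable h₀.2.2, ← FPR, sub_self, mul_zero, add_zero]

lemma StrictMLRP.exists_classifier_rates {f₁ f₀ : ℝ → ℝ} (h₁ : IsFullSupportDensity f₁)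
    (h₀ : IsFullSupportDensity f₀) (hm : StrictMLRP f₁ f₀) :
    ∃ D > 0, ∀ d, 0 ≤ d → d ≤ D →
      ∃ δ, IsClassifier δ ∧ TPR δ f₁ = 1 / 2 + d ∧ FPR δ f₀ = 1 / 2 := by
  obtain ⟨δ, hδ, hgap⟩ := exists_classifier_fpr_lt_tpr h₁.1 h₀.1 h₁.integrable h₀.integrable
    (h₁.2.2.trans h₀.2.2.symm) hm.not_ae_eq
  exact ⟨(TPR δ f₁ - FPR δ f₀) / 2, by linarith, fun d hd hdle =>
    exists_classifier_rates_of_le_gap h₁ h₀ hδ hgap hd hdle⟩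

lemma exists_nonneg_eq_of_le_apply_zero {α β : Type*} [LinearOrder α] [Zero α] [PartialOrder β]
    {u v : α → β} (hu : Monotone u) (hv : Monotone v) {c : α} (hc : u c = v c)
    (hu0 : u 0 ≤ u c) (hv0 : v 0 ≤ v c) : ∃ c', 0 ≤ c' ∧ u c' = v c' := by
  rcases le_or_gt 0 c with hnn | hneg
  · exact ⟨c, hnn, hc⟩
  · refine ⟨0, le_rfl, ?_⟩
    rw [← (hu hneg.le).antisymm hu0, ← (hv hneg.le).antisymm hv0, hc]

theorem all_four_iff_nonneg_crossing_general
    (f₁X f₀X f₁Y f₀Y : ℝ → ℝ) (HX HY : ℝ → ℝ)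
    (h₁X : IsFullSupportDensity f₁X) (h₀X : IsFullSupportDensity f₀X)
    (h₁Y : IsFullSupportDensity f₁Y) (h₀Y : IsFullSupportDensity f₀Y)
    (hmX : StrictMLRP f₁X f₀X) (hmY : StrictMLRP f₁Y f₀Y)
    (hHXm : Monotone HX)
    (hHYm : Monotone HY) :
    (∃ (δX δY : ℝ → ℝ) (𝒯 ℱ r : ℝ),
      IsClassifier δX ∧ IsClassifier δY ∧
      TPR δX f₁X = 𝒯 ∧ TPR δY f₁Y = 𝒯 ∧
      FPR δX f₀X = ℱ ∧ FPR δY f₀Y = ℱ ∧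
      𝒯 > ℱ ∧
      HX (r * (𝒯 - ℱ)) = HY (r * (𝒯 - ℱ)) ∧
      HX (r * (𝒯 - ℱ)) ≥ HX 0 ∧ HY (r * (𝒯 - ℱ)) ≥ HY 0) ↔
    (∃ cbar : ℝ, 0 ≤ cbar ∧ HX cbar = HY cbar) := by
  constructor
  · rintro ⟨_, _, _, _, _, -, -, -, -, -, -, -, hcross, hX0, hY0⟩
    exact exists_nonneg_eq_of_le_apply_zero hHXm hHYm hcross hX0 hY0
  · rintro ⟨c, hc, hcross⟩
    obtain ⟨DX, hDX, hX⟩ := hmX.exists_classifier_rates h₁X h₀X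
    obtain ⟨DY, hDY, hY⟩ := hmY.exists_classifier_rates h₁Y h₀Y
    have hd : 0 < min DX DY := lt_min hDX hDY
    obtain ⟨δX, hδX, hTX, hFX⟩ := hX _ hd.le (min_le_left _ _)
    obtain ⟨δY, hδY, hTY, hFY⟩ := hY _ hd.le (min_le_right _ _)
    have hr : c / min DX DY * (1 / 2 + min DX DY - 1 / 2) = c := by
      field_simp; ring
    refine ⟨δX, δY, _, _, c / min DX DY, hδX, hδY, hTX, hTY, hFX, hFY, by linarith, ?_⟩
    rw [hr]
    exact ⟨hcross, hHXm hc, hHYm hc⟩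

/-- Full characterization: error-rate balance via an informative classifier, equal stakes,
predictive parity (equal equilibrium prevalence) and aligned incentives can be jointly
satisfied if and only if the groups' cost CDFs cross at some nonnegative value. -/
theorem all_four_iff_nonneg_crossing
    (f₁X f₀X f₁Y f₀Y : ℝ → ℝ) (HX HY : ℝ → ℝ)
    (h₁X : IsFullSupportDensity f₁X) (h₀X : IsFullSupportDensity f₀X)
    (h₁Y : IsFullSupportDensity f₁Y) (h₀Y : IsFullSupportDensity f₀Y)
    (hmX : StrictMLRP f₁X f₀X) (hmY : StrictMLRP f₁Y f₀Y)
    (hHXm : Monotone HX) (hHXc : Continuous HX)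
    (hHYm : Monotone HY) (hHYc : Continuous HY) :
    (∃ (δX δY : ℝ → ℝ) (𝒯 ℱ r : ℝ),
      IsClassifier δX ∧ IsClassifier δY ∧
      TPR δX f₁X = 𝒯 ∧ TPR δY f₁Y = 𝒯 ∧
      FPR δX f₀X = ℱ ∧ FPR δY f₀Y = ℱ ∧
      𝒯 > ℱ ∧
      HX (r * (𝒯 - ℱ)) = HY (r * (𝒯 - ℱ)) ∧
      HX (r * (𝒯 - ℱ)) ≥ HX 0 ∧ HY (r * (𝒯 - ℱ)) ≥ HY 0) ↔
    (∃ cbar : ℝ, 0 ≤ cbar ∧ HX cbar = HY cbar) :=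
  all_four_iff_nonneg_crossing_general f₁X f₀X f₁Y f₀Y HX HY h₁X h₀X h₁Y h₀Y hmX hmY hHXm hHYm
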